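/- arXiv:1804.03426 — 4 statements merged into one kernel-verified Lean document; each statement's English description precedes it below -/
import Mathlib

section
/- For all p, q, r ∈ [0,1/2], Cin(p,q,r) ⊆ Cin1(p,q,r); that is, in the Dueck-type example with Markov chain Z₀→Z₁→Z₂, the secret-key feedback inner bound contains the non-feedback inner bound. -/
/-- The binary entropy function to base 2, with the convention h(0)=h(1)=0
(automatic since `Real.logb 2 0 = 0`). -/
noncomputable def binEnt (x : ℝ) : ℝ := -x * Real.logb 2 x - (1 - x) * Real.logb 2 (1 - x)

/-- The binary convolution `a ⋆ b = a(1-b)+(1-a)b`. -/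
def binConv (a b : ℝ) : ℝ := a * (1 - b) + (1 - a) * b

/-- Non-feedback inner bound for the Dueck-type example with `Z₀ → Z₁ → Z₂`. -/
noncomputable def Cin (p q r : ℝ) : Set (ℝ × ℝ) :=
  {R : ℝ × ℝ | 0 ≤ R.1 ∧ R.1 ≤ 1 - binEnt q ∧ 0 ≤ R.2 ∧ R.2 ≤ 1 - binEnt (binConv r q)}

/-- Secret-key feedback inner bound for the Dueck-type example with `Z₀ → Z₁ → Z₂`. -/
noncomputable def Cin1 (p q r : ℝ) : Set (ℝ × ℝ) :=
  {R : ℝ × ℝ | 0 ≤ R.1 ∧ 0 ≤ R.2 ∧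
    R.1 ≤ 1 - binEnt (binConv r q) + binEnt r ∧
    R.2 ≤ 1 - binEnt (binConv r q) + binEnt r ∧
    R.1 ≤ 2 - binEnt p - binEnt q ∧
    R.2 ≤ 2 - binEnt p - binEnt (binConv r q) ∧
    R.1 + R.2 ≤ 3 - binEnt p - binEnt q - binEnt (binConv r q)}

/-- Hybrid feedback inner bound for the Dueck-type example with `Z₀ → Z₁ → Z₂`. -/
noncomputable def Cin2 (p q r : ℝ) : Set (ℝ × ℝ) :=
  {R : ℝ × ℝ | 0 ≤ R.1 ∧ 0 ≤ R.2 ∧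
    R.1 ≤ 1 + binEnt q - binEnt (binConv r q) + binEnt r ∧
    R.2 ≤ 1 + binEnt r ∧
    R.1 ≤ 2 - binEnt p - binEnt q ∧
    R.2 ≤ 2 - binEnt p - binEnt (binConv r q) ∧
    R.1 + R.2 ≤ 3 - binEnt p - binEnt q - binEnt r}

/-- Cut-set outer bound for the Dueck-type example with `Z₀ → Z₁ → Z₂`. -/
noncomputable def Cout (p q r : ℝ) : Set (ℝ × ℝ) :=
  {R : ℝ × ℝ | 0 ≤ R.1 ∧ 0 ≤ R.2 ∧
    R.1 ≤ 2 - binEnt p - binEnt q ∧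
    R.2 ≤ 2 - binEnt p - binEnt (binConv r q) ∧
    R.1 + R.2 ≤ 3 - binEnt p - binEnt q - binEnt r}


lemma binEnt_eq (x : ℝ) : binEnt x = Real.binEntropy x / Real.log 2 := by
  simp [binEnt, Real.binEntropy, Real.logb, Real.log_inv]
  ring

lemma binEnt_nonneg {x : ℝ} (h0 : 0 ≤ x) (h1 : x ≤ 1) : 0 ≤ binEnt x := by
  rw [binEnt_eq]
  exact div_nonneg (Real.binEntropy_nonneg h0 h1) (Real.log_nonneg one_le_two)

lemma binEnt_le_one (x : ℝ) : binEnt x ≤ 1 := by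
  rw [binEnt_eq, div_le_one (Real.log_pos one_lt_two)]
  exact Real.binEntropy_le_log_two

lemma group_ineq {a b : ℝ} (ha : 0 ≤ a) (hb : 0 ≤ b) :
    -(a + b) * Real.logb 2 (a + b) ≤ -a * Real.logb 2 a - b * Real.logb 2 b := by
  have h1 : a * Real.logb 2 a ≤ a * Real.logb 2 (a + b) := by
    rcases ha.eq_or_lt with h | h
    · simp [← h]
    · exact mul_le_mul_of_nonneg_left
        (Real.logb_le_logb_of_le one_lt_two h (by linarith)) ha
  have h2 : b * Real.logb 2 b ≤ b * Real.logb 2 (a + b) := by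
    rcases hb.eq_or_lt with h | h
    · simp [← h]
    · exact mul_le_mul_of_nonneg_left
        (Real.logb_le_logb_of_le one_lt_two h (by linarith)) hb
  nlinarith

lemma binEnt_conv_le {q r : ℝ} (hq0 : 0 ≤ q) (hq1 : q ≤ 1/2) (hr0 : 0 ≤ r) (hr1 : r ≤ 1/2) :
    binEnt (binConv r q) ≤ binEnt q + binEnt r := by
  rcases hq0.eq_or_lt with hq | hq
  · have : binConv r q = r := by simp [binConv, ← hq]
    rw [this]
    have := binEnt_nonneg hq0 (by linarith)
    linarith
  rcases hr0.eq_or_lt with hr | hr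
  · have : binConv r q = q := by simp [binConv, ← hr]
    rw [this]
    have := binEnt_nonneg hr0 (by linarith)
    linarith
  -- now 0 < q, 0 < r, q ≤ 1/2, r ≤ 1/2
  have h1q : (0:ℝ) < 1 - q := by linarith
  have h1r : (0:ℝ) < 1 - r := by linarith
  set s := binConv r q with hs
  have hs1 : 1 - s = (1-r)*(1-q) + r*q := by simp [hs, binConv]; ring
  have hsum : s = r*(1-q) + (1-r)*q := by simp [hs, binConv]
  have key1 : -s * Real.logb 2 s ≤
      -(r*(1-q)) * Real.logb 2 (r*(1-q)) - ((1-r)*q) * Real.logb 2 ((1-r)*q) := by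
    rw [hsum]
    exact group_ineq (by positivity) (by positivity)
  have key2 : -(1-s) * Real.logb 2 (1-s) ≤
      -((1-r)*(1-q)) * Real.logb 2 ((1-r)*(1-q)) - (r*q) * Real.logb 2 (r*q) := by
    rw [hs1]
    exact group_ineq (by positivity) (by positivity)
  have e1 : Real.logb 2 (r*(1-q)) = Real.logb 2 r + Real.logb 2 (1-q) :=
    Real.logb_mul (by positivity) (by positivity)
  have e2 : Real.logb 2 ((1-r)*q) = Real.logb 2 (1-r) + Real.logb 2 q :=
    Real.logb_mul (by positivity) (by positivity)
  have e3 : Real.logb 2 ((1-r)*(1-q)) = Real.logb 2 (1-r) + Real.logb 2 (1-q) :=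
    Real.logb_mul (by positivity) (by positivity)
  have e4 : Real.logb 2 (r*q) = Real.logb 2 r + Real.logb 2 q :=
    Real.logb_mul (by positivity) (by positivity)
  simp only [binEnt]
  simp only [e1, e2, e3, e4] at key1 key2
  nlinarith [key1, key2]

/-- The secret-key feedback inner bound contains the non-feedback inner bound. -/
theorem Cin_subset_Cin1 (p q r : ℝ) (hp0 : 0 ≤ p) (hp1 : p ≤ 1/2)
    (hq0 : 0 ≤ q) (hq1 : q ≤ 1/2) (hr0 : 0 ≤ r) (hr1 : r ≤ 1/2) :
    Cin p q r ⊆ Cin1 p q r := by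
  rintro ⟨R1, R2⟩ ⟨h1, h2, h3, h4⟩
  have hsub := binEnt_conv_le hq0 hq1 hr0 hr1
  have hrnn := binEnt_nonneg hr0 (by linarith)
  have hp1 := binEnt_le_one p
  exact ⟨h1, h3, by linarith, by linarith, by linarith, by linarith, by linarith⟩
end

section
/- For all p, q, r ∈ [0,1/2], Cin1(p,q,r) ⊆ Cin2(p,q,r); that is, in the Dueck-type example with Markov chain Z₀→Z₁→Z₂, the hybrid feedback inner bound contains the secret-key feedback inner bound. -/
lemma binEnt_mono {x y : ℝ} (h0 : 0 ≤ x) (hxy : x ≤ y) (hy : y ≤ 1/2) :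
    binEnt x ≤ binEnt y := by
  rw [binEnt_eq, binEnt_eq]
  have hlog : (0:ℝ) < Real.log 2 := Real.log_pos (by norm_num)
  apply div_le_div_of_nonneg_right _ hlog.le
  have := Real.binEntropy_strictMonoOn.monotoneOn
    ⟨h0, by rw [show (2:ℝ)⁻¹ = 1/2 by norm_num]; linarith⟩
    ⟨by linarith, by rw [show (2:ℝ)⁻¹ = 1/2 by norm_num]; linarith⟩ hxy
  exact this

/-- The hybrid feedback inner bound contains the secret-key feedback inner bound. -/
theorem Cin1_subset_Cin2 (p q r : ℝ) (hp0 : 0 ≤ p) (hp1 : p ≤ 1/2)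
    (hq0 : 0 ≤ q) (hq1 : q ≤ 1/2) (hr0 : 0 ≤ r) (hr1 : r ≤ 1/2) :
    Cin1 p q r ⊆ Cin2 p q r := by
  intro R hR
  obtain ⟨h1, h2, h3, h4, h5, h6, h7⟩ := hR
  have hrc0 : r ≤ binConv r q := by unfold binConv; nlinarith
  have hrc1 : binConv r q ≤ 1/2 := by unfold binConv; nlinarith
  have hq : 0 ≤ binEnt q := binEnt_nonneg hq0 (by linarith)
  have hc : 0 ≤ binEnt (binConv r q) :=
    binEnt_nonneg (by linarith) (by linarith)
  have hmono : binEnt r ≤ binEnt (binConv r q) := binEnt_mono hr0 hrc0 hrc1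
  exact ⟨h1, h2, by linarith, by linarith, h5, h6, by linarith⟩
end

section
/- For p = q = r = 0.05, the hybrid feedback inner bound is a proper subset of the cut-set outer bound: Cin2(0.05,0.05,0.05) ⊊ Cout(0.05,0.05,0.05). In particular, the point (R₁,R₂) = (1.4, 0.5) belongs to Cout(0.05,0.05,0.05) but not to Cin2(0.05,0.05,0.05). -/
private lemma log_pow_le_log_pow {a b : ℝ} {m n : ℕ} (ha : 0 < a)
    (h : a ^ m ≤ b ^ n) : (m : ℝ) * Real.log a ≤ (n : ℝ) * Real.log b := by
  have := Real.log_le_log (by positivity) h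
  rwa [Real.log_pow, Real.log_pow] at this

private lemma binEnt005_le : binEnt 0.05 ≤ 0.3 := by
  have hL : 0 < Real.log 2 := Real.log_pos (by norm_num)
  -- log 20 ≤ (22/5) log 2   since 20^5 ≤ 2^22
  have h20 : Real.log 20 ≤ 22 / 5 * Real.log 2 := by
    have := log_pow_le_log_pow (a := 20) (b := 2) (m := 5) (n := 22) (by norm_num) (by norm_num)
    push_cast at this; linarith
  -- log (20/19) ≤ (1/13) log 2   since (20/19)^13 ≤ 2
  have h2019 : Real.log (20 / 19) ≤ 1 / 13 * Real.log 2 := by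
    have := log_pow_le_log_pow (a := 20 / 19) (b := 2) (m := 13) (n := 1) (by norm_num)
      (by rw [div_pow]; rw [div_le_iff₀ (by positivity)]; norm_num)
    push_cast at this; linarith
  have ha : Real.log 0.05 = -Real.log 20 := by
    rw [show (0.05 : ℝ) = 20⁻¹ by norm_num, Real.log_inv]
  have hb : Real.log 0.95 = -Real.log (20 / 19) := by
    rw [show (0.95 : ℝ) = (20 / 19)⁻¹ by norm_num, Real.log_inv]
  have e1 : binEnt 0.05 = (0.05 * Real.log 20 + 0.95 * Real.log (20 / 19)) / Real.log 2 := by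
    unfold binEnt Real.logb
    rw [show (1 : ℝ) - 0.05 = 0.95 by norm_num, ha, hb]; ring
  rw [e1, div_le_iff₀ hL]
  nlinarith

private lemma binEnt0095_ge : (0.285 : ℝ) ≤ binEnt 0.095 ∧ binEnt 0.095 ≤ 0.49 := by
  have hL : 0 < Real.log 2 := Real.log_pos (by norm_num)
  -- 3 log 2 ≤ log (200/19) ≤ (7/2) log 2
  have hl : 3 * Real.log 2 ≤ Real.log (200 / 19) := by
    have := log_pow_le_log_pow (a := 2) (b := 200 / 19) (m := 3) (n := 1) (by norm_num)
      (by rw [pow_one, le_div_iff₀ (by norm_num)]; norm_num)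
    push_cast at this; linarith
  have hu : Real.log (200 / 19) ≤ 7 / 2 * Real.log 2 := by
    have := log_pow_le_log_pow (a := 200 / 19) (b := 2) (m := 2) (n := 7) (by norm_num)
      (by rw [div_pow, div_le_iff₀ (by positivity)]; norm_num)
    push_cast at this; linarith
  -- 0 ≤ log (200/181) ≤ (1/6) log 2
  have hl2 : 0 ≤ Real.log (200 / 181) := Real.log_nonneg (by norm_num)
  have hu2 : Real.log (200 / 181) ≤ 1 / 6 * Real.log 2 := by
    have := log_pow_le_log_pow (a := 200 / 181) (b := 2) (m := 6) (n := 1) (by norm_num)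
      (by rw [div_pow, pow_one, div_le_iff₀ (by positivity)]; norm_num)
    push_cast at this; linarith
  have ha : Real.log 0.095 = -Real.log (200 / 19) := by
    rw [show (0.095 : ℝ) = (200 / 19)⁻¹ by norm_num, Real.log_inv]
  have hb : Real.log 0.905 = -Real.log (200 / 181) := by
    rw [show (0.905 : ℝ) = (200 / 181)⁻¹ by norm_num, Real.log_inv]
  have e1 : binEnt 0.095 =
      (0.095 * Real.log (200 / 19) + 0.905 * Real.log (200 / 181)) / Real.log 2 := by
    unfold binEnt Real.logb
    rw [show (1 : ℝ) - 0.095 = 0.905 by norm_num, ha, hb]; ring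
  constructor
  · rw [e1, le_div_iff₀ hL]; nlinarith
  · rw [e1, div_le_iff₀ hL]; nlinarith

private lemma conv_eq : binConv 0.05 0.05 = 0.095 := by
  unfold binConv; norm_num

/-- For `p = q = r = 0.05`, the hybrid feedback inner bound is a proper subset
of the cut-set outer bound; the point `(1.4, 0.5)` witnesses the gap. -/
theorem Cin2_ssubset_Cout :
    Cin2 0.05 0.05 0.05 ⊂ Cout 0.05 0.05 0.05 ∧
    ((1.4, 0.5) : ℝ × ℝ) ∈ Cout 0.05 0.05 0.05 ∧
    ((1.4, 0.5) : ℝ × ℝ) ∉ Cin2 0.05 0.05 0.05 := by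
  have h5 : binEnt 0.05 ≤ 0.3 := binEnt005_le
  have h5nn : 0 ≤ binEnt 0.05 := by
    have hL : 0 < Real.log 2 := Real.log_pos (by norm_num)
    have h1 : Real.log 0.05 ≤ 0 := Real.log_nonpos (by norm_num) (by norm_num)
    have h2 : Real.log (1 - 0.05) ≤ 0 := Real.log_nonpos (by norm_num) (by norm_num)
    unfold binEnt Real.logb
    have := div_nonpos_of_nonpos_of_nonneg h1 hL.le
    have := div_nonpos_of_nonpos_of_nonneg h2 hL.le
    nlinarith
  obtain ⟨h95l, h95u⟩ := binEnt0095_ge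
  have hmem : ((1.4, 0.5) : ℝ × ℝ) ∈ Cout 0.05 0.05 0.05 := by
    simp only [Cout, Set.mem_setOf_eq, conv_eq]
    refine ⟨by norm_num, by norm_num, by linarith, by linarith, by linarith⟩
  have hnot : ((1.4, 0.5) : ℝ × ℝ) ∉ Cin2 0.05 0.05 0.05 := by
    simp only [Cin2, Set.mem_setOf_eq, conv_eq]
    intro h
    obtain ⟨-, -, h3, -⟩ := h
    linarith
  have hsub : Cin2 0.05 0.05 0.05 ⊆ Cout 0.05 0.05 0.05 := by
    rintro R ⟨hr1, hr2, -, -, hr5, hr6, hr7⟩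
    exact ⟨hr1, hr2, hr5, hr6, hr7⟩
  exact ⟨⟨hsub, fun hsup => hnot (hsup hmem)⟩, hmem, hnot⟩
end

section
/- For p = 0.25, q = 0.2, r = 0.3, the hybrid feedback inner bound coincides with the cut-set outer bound: Cin2(0.25,0.2,0.3) = Cout(0.25,0.2,0.3); hence the secrecy capacity region of this instance of the Dueck-type example with noiseless feedback is determined. -/
lemma log_lb {t : ℝ} (ht : 0 < t) : 1 - 1/t ≤ Real.log t := by
  have h := Real.log_le_sub_one_of_pos (show (0:ℝ) < t⁻¹ by positivity)
  rw [Real.log_inv] at h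
  have e : (1:ℝ)/t = t⁻¹ := one_div t
  rw [e]; linarith

lemma binEnt_mul_log2 (x : ℝ) :
    binEnt x * Real.log 2 = -x * Real.log x - (1 - x) * Real.log (1 - x) := by
  have h2 : Real.log 2 ≠ 0 := ne_of_gt (Real.log_pos (by norm_num))
  simp only [binEnt, Real.logb]
  field_simp

lemma l2pos : (0:ℝ) < Real.log 2 := Real.log_pos (by norm_num)

lemma log_quarter : Real.log 0.25 = -(2 * Real.log 2) := by
  have h : (0.25:ℝ) = (2^2)⁻¹ := by norm_num
  rw [h, Real.log_inv, Real.log_pow]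
  push_cast; ring

lemma binEnt_quarter_lb : (0.77:ℝ) ≤ binEnt 0.25 := by
  have key := binEnt_mul_log2 0.25
  have h75 : Real.log 0.75 ≤ -0.25 := by
    have := Real.log_le_sub_one_of_pos (show (0:ℝ) < 0.75 by norm_num); linarith
  have l2lt : Real.log 2 < 0.6931471808 := Real.log_two_lt_d9
  have hq := log_quarter
  rw [show (1:ℝ) - 0.25 = 0.75 by norm_num] at key
  nlinarith [l2pos]

lemma binEnt_fifth_lb : (0.46:ℝ) ≤ binEnt 0.2 := by
  have key := binEnt_mul_log2 0.2
  have h1 : Real.log 0.2 ≤ -0.8 := by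
    have := Real.log_le_sub_one_of_pos (show (0:ℝ) < 0.2 by norm_num); linarith
  have h2 : Real.log 0.8 ≤ -0.2 := by
    have := Real.log_le_sub_one_of_pos (show (0:ℝ) < 0.8 by norm_num); linarith
  have l2lt : Real.log 2 < 0.6931471808 := Real.log_two_lt_d9
  rw [show (1:ℝ) - 0.2 = 0.8 by norm_num] at key
  nlinarith [l2pos]

lemma binEnt_three_lb : (0.6:ℝ) ≤ binEnt 0.3 := by
  have key := binEnt_mul_log2 0.3
  have h1 : Real.log 0.3 ≤ -0.7 := by
    have := Real.log_le_sub_one_of_pos (show (0:ℝ) < 0.3 by norm_num); linarith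
  have h2 : Real.log 0.7 ≤ -0.3 := by
    have := Real.log_le_sub_one_of_pos (show (0:ℝ) < 0.7 by norm_num); linarith
  have l2lt : Real.log 2 < 0.6931471808 := Real.log_two_lt_d9
  rw [show (1:ℝ) - 0.3 = 0.7 by norm_num] at key
  nlinarith [l2pos]

lemma binEnt_38_nonneg : (0:ℝ) ≤ binEnt 0.38 := by
  have key := binEnt_mul_log2 0.38
  have h1 : Real.log 0.38 ≤ 0 := Real.log_nonpos (by norm_num) (by norm_num)
  have h2 : Real.log 0.62 ≤ 0 := Real.log_nonpos (by norm_num) (by norm_num)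
  rw [show (1:ℝ) - 0.38 = 0.62 by norm_num] at key
  nlinarith [l2pos]

lemma binEnt_38_le_one : binEnt 0.38 ≤ 1 := by
  have key := binEnt_mul_log2 0.38
  have h38 : Real.log 0.38 = Real.log 0.76 - Real.log 2 := by
    rw [show (0.38:ℝ) = 0.76 / 2 by norm_num, Real.log_div (by norm_num) (by norm_num)]
  have h62 : Real.log 0.62 = Real.log 1.24 - Real.log 2 := by
    rw [show (0.62:ℝ) = 1.24 / 2 by norm_num, Real.log_div (by norm_num) (by norm_num)]
  have h1 : (1:ℝ) - 1/0.76 ≤ Real.log 0.76 := log_lb (by norm_num)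
  have h2 : (1:ℝ) - 1/1.24 ≤ Real.log 1.24 := log_lb (by norm_num)
  rw [show (1:ℝ) - 0.38 = 0.62 by norm_num] at key
  nlinarith [l2pos]

lemma conv_val : binConv 0.3 0.2 = (0.38:ℝ) := by norm_num [binConv]

lemma E1 : 2 - binEnt 0.25 - binEnt 0.2 ≤
    1 + binEnt 0.2 - binEnt (binConv 0.3 0.2) + binEnt 0.3 := by
  rw [conv_val]
  linarith [binEnt_quarter_lb, binEnt_fifth_lb, binEnt_three_lb, binEnt_38_le_one]

lemma E2 : 2 - binEnt 0.25 - binEnt (binConv 0.3 0.2) ≤ 1 + binEnt 0.3 := by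
  rw [conv_val]
  linarith [binEnt_quarter_lb, binEnt_three_lb, binEnt_38_nonneg]

/-- For `p = 0.25`, `q = 0.2`, `r = 0.3`, the hybrid feedback inner bound
coincides with the cut-set outer bound, determining the secrecy capacity region. -/
theorem Cin2_eq_Cout : Cin2 0.25 0.2 0.3 = Cout 0.25 0.2 0.3 := by
  ext R
  simp only [Cin2, Cout, Set.mem_setOf_eq]
  constructor
  · rintro ⟨h1, h2, _, _, h5, h6, h7⟩
    exact ⟨h1, h2, h5, h6, h7⟩
  · rintro ⟨h1, h2, h5, h6, h7⟩
    exact ⟨h1, h2, by linarith [E1], by linarith [E2], h5, h6, h7⟩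
end
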